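/- arXiv:1105.4995 — 6 statements merged into one kernel-verified Lean document; each statement's English description precedes it below -/
import Mathlib

section
/- Let m̄ : Δ(A) × Δ(B) → S(ℝ^d) be the multilinear extension of a bounded set-valued payoff function on finite action sets A and B, bounded in norm by M, and let C ⊆ ℝ^d be a nonempty set. Fix y ∈ Δ(B). Then the map D_y : Δ(A) → ℝ defined by D_y(x) = sup_{d ∈ m̄(x,y)} inf_{c ∈ C} ‖c − d‖₂ is continuous; in fact it is M-Lipschitz with respect to the ℓ¹ norm on Δ(A): for all x, x' ∈ Δ(A), |D_y(x) − D_y(x')| ≤ M ‖x − x'‖₁. -/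
open scoped BigOperators

/-- Linear (Minkowski) extension of a set-valued payoff function to weight vectors. -/
def mixSet {A B : Type*} [Fintype A] [Fintype B] {d : ℕ}
    (m : A × B → Set (EuclideanSpace ℝ (Fin d))) (μ : A × B → ℝ) :
    Set (EuclideanSpace ℝ (Fin d)) :=
  {x | ∃ θ : A × B → EuclideanSpace ℝ (Fin d),
    (∀ ab, θ ab ∈ m ab) ∧ x = ∑ ab, μ ab • θ ab}

/-- The bilinear (product-distribution) extension `m̄(x, y)`. -/
def mixSet2 {A B : Type*} [Fintype A] [Fintype B] {d : ℕ}
    (m : A × B → Set (EuclideanSpace ℝ (Fin d))) (x : A → ℝ) (y : B → ℝ) :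
    Set (EuclideanSpace ℝ (Fin d)) :=
  mixSet m (fun ab => x ab.1 * y ab.2)

lemma mixSet2_nonempty {A B : Type*} [Fintype A] [Fintype B] {d : ℕ}
    (m : A × B → Set (EuclideanSpace ℝ (Fin d)))
    (hne : ∀ ab, (m ab).Nonempty) (x : A → ℝ) (y : B → ℝ) :
    (mixSet2 m x y).Nonempty := by
  refine ⟨∑ ab, (x ab.1 * y ab.2) • (hne ab).choose, fun ab => (hne ab).choose, fun ab => (hne ab).choose_spec, rfl⟩

lemma norm_mixSet2_le {A B : Type*} [Fintype A] [Fintype B] {d : ℕ}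
    (m : A × B → Set (EuclideanSpace ℝ (Fin d))) (M : ℝ)
    (hbound : ∀ ab, ∀ v ∈ m ab, ‖v‖ ≤ M)
    {x : A → ℝ} (hx : x ∈ stdSimplex ℝ A) {y : B → ℝ} (hy : y ∈ stdSimplex ℝ B)
    {z : EuclideanSpace ℝ (Fin d)} (hz : z ∈ mixSet2 m x y) : ‖z‖ ≤ M := by
  obtain ⟨θ, hθ, rfl⟩ := hz
  calc ‖∑ ab, (x ab.1 * y ab.2) • θ ab‖ ≤ ∑ ab, ‖(x ab.1 * y ab.2) • θ ab‖ :=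
        norm_sum_le _ _
    _ ≤ ∑ ab : A × B, (x ab.1 * y ab.2) * M := by
        refine Finset.sum_le_sum fun ab _ => ?_
        rw [norm_smul, Real.norm_eq_abs,
          abs_of_nonneg (mul_nonneg (hx.1 ab.1) (hy.1 ab.2))]
        exact mul_le_mul_of_nonneg_left (hbound ab _ (hθ ab))
          (mul_nonneg (hx.1 ab.1) (hy.1 ab.2))
    _ = M := by
        rw [Fintype.sum_prod_type]
        have h : ∀ a : A, ∑ b, x a * y b * M = x a * M := fun a => by
          rw [← Finset.sum_mul, ← Finset.mul_sum, hy.2, mul_one]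
        simp_rw [h, ← Finset.sum_mul, hx.2, one_mul]

lemma bdd_img {A B : Type*} [Fintype A] [Fintype B] {d : ℕ}
    (m : A × B → Set (EuclideanSpace ℝ (Fin d))) (M : ℝ)
    (hbound : ∀ ab, ∀ v ∈ m ab, ‖v‖ ≤ M)
    (C : Set (EuclideanSpace ℝ (Fin d))) (hC : C.Nonempty)
    {x : A → ℝ} (hx : x ∈ stdSimplex ℝ A) {y : B → ℝ} (hy : y ∈ stdSimplex ℝ B) :
    BddAbove ((fun z => Metric.infDist z C) '' mixSet2 m x y) := by
  obtain ⟨c0, hc0⟩ := hC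
  refine ⟨M + ‖c0‖, ?_⟩
  rintro _ ⟨z, hz, rfl⟩
  calc Metric.infDist z C ≤ dist z c0 := Metric.infDist_le_dist_of_mem hc0
    _ ≤ ‖z‖ + ‖c0‖ := by rw [dist_eq_norm]; exact norm_sub_le _ _
    _ ≤ M + ‖c0‖ := by
        have := norm_mixSet2_le m M hbound hx hy hz
        linarith

lemma key {A B : Type*} [Fintype A] [Fintype B] {d : ℕ}
    (m : A × B → Set (EuclideanSpace ℝ (Fin d))) (M : ℝ)
    (hne : ∀ ab, (m ab).Nonempty)
    (hbound : ∀ ab, ∀ v ∈ m ab, ‖v‖ ≤ M)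
    (C : Set (EuclideanSpace ℝ (Fin d))) (hC : C.Nonempty)
    {y : B → ℝ} (hy : y ∈ stdSimplex ℝ B)
    {x : A → ℝ} (hx : x ∈ stdSimplex ℝ A) {x' : A → ℝ} (hx' : x' ∈ stdSimplex ℝ A) :
    sSup ((fun z => Metric.infDist z C) '' mixSet2 m x y) ≤
      sSup ((fun z => Metric.infDist z C) '' mixSet2 m x' y) + M * ∑ a, |x a - x' a| := by
  refine Real.sSup_le ?_ ?_
  · rintro _ ⟨z, ⟨θ, hθ, rfl⟩, rfl⟩
    set z' : EuclideanSpace ℝ (Fin d) := ∑ ab, (x' ab.1 * y ab.2) • θ ab with hz'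
    have hz'mem : z' ∈ mixSet2 m x' y := ⟨θ, hθ, rfl⟩
    have hdist : dist (∑ ab, (x ab.1 * y ab.2) • θ ab) z' ≤ M * ∑ a, |x a - x' a| := by
      rw [dist_eq_norm, hz', ← Finset.sum_sub_distrib]
      calc ‖∑ ab, ((x ab.1 * y ab.2) • θ ab - (x' ab.1 * y ab.2) • θ ab)‖
          ≤ ∑ ab, ‖(x ab.1 * y ab.2) • θ ab - (x' ab.1 * y ab.2) • θ ab‖ := norm_sum_le _ _
        _ ≤ ∑ ab : A × B, |x ab.1 - x' ab.1| * y ab.2 * M := by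
            refine Finset.sum_le_sum fun ab _ => ?_
            rw [← sub_smul, norm_smul, Real.norm_eq_abs]
            have h1 : x ab.1 * y ab.2 - x' ab.1 * y ab.2 = (x ab.1 - x' ab.1) * y ab.2 := by ring
            rw [h1, abs_mul, abs_of_nonneg (hy.1 ab.2)]
            exact mul_le_mul_of_nonneg_left (hbound ab _ (hθ ab))
              (mul_nonneg (abs_nonneg _) (hy.1 ab.2))
        _ = M * ∑ a, |x a - x' a| := by
            rw [Fintype.sum_prod_type]
            have h : ∀ a : A, ∑ b, |x a - x' a| * y b * M = |x a - x' a| * M := fun a => by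
              rw [← Finset.sum_mul, ← Finset.mul_sum, hy.2, mul_one]
            simp_rw [h, ← Finset.sum_mul, mul_comm]
    calc Metric.infDist (∑ ab, (x ab.1 * y ab.2) • θ ab) C
        ≤ Metric.infDist z' C + dist (∑ ab, (x ab.1 * y ab.2) • θ ab) z' :=
          Metric.infDist_le_infDist_add_dist
      _ ≤ sSup ((fun z => Metric.infDist z C) '' mixSet2 m x' y) + M * ∑ a, |x a - x' a| := by
          refine add_le_add ?_ hdist
          exact le_csSup (bdd_img m M hbound C hC hx' hy) ⟨z', hz'mem, rfl⟩
  · obtain ⟨z', hz'⟩ := mixSet2_nonempty m hne x' y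
    have h1 : Metric.infDist z' C ≤ sSup ((fun z => Metric.infDist z C) '' mixSet2 m x' y) :=
      le_csSup (bdd_img m M hbound C hC hx' hy) ⟨z', hz', rfl⟩
    have h2 : (0:ℝ) ≤ Metric.infDist z' C := Metric.infDist_nonneg
    have hA : Nonempty A := by
      by_contra h
      rw [not_nonempty_iff] at h
      have := hx.2
      simp at this
    have hB : Nonempty B := by
      by_contra h
      rw [not_nonempty_iff] at h
      have := hy.2
      simp at this
    set ab : A × B := (Classical.arbitrary A, Classical.arbitrary B)
    have h3 : (0:ℝ) ≤ M := le_trans (norm_nonneg _) (hbound ab (hne ab).choose (hne ab).choose_spec)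
    have h4 : (0:ℝ) ≤ ∑ a, |x a - x' a| := Finset.sum_nonneg fun a _ => abs_nonneg _
    nlinarith

theorem stmt2 {A B : Type*} [Fintype A] [Fintype B] {d : ℕ}
    (m : A × B → Set (EuclideanSpace ℝ (Fin d))) (M : ℝ)
    (hne : ∀ ab, (m ab).Nonempty)
    (hbound : ∀ ab, ∀ v ∈ m ab, ‖v‖ ≤ M)
    (C : Set (EuclideanSpace ℝ (Fin d))) (hC : C.Nonempty)
    (y : B → ℝ) (hy : y ∈ stdSimplex ℝ B) :
    ∀ x ∈ stdSimplex ℝ A, ∀ x' ∈ stdSimplex ℝ A,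
      |sSup ((fun z => Metric.infDist z C) '' mixSet2 m x y) -
          sSup ((fun z => Metric.infDist z C) '' mixSet2 m x' y)| ≤
        M * ∑ a, |x a - x' a| := by
  intro x hx x' hx'
  rw [abs_sub_le_iff]
  constructor
  · have := key m M hne hbound C hC hy hx hx'
    linarith
  · have := key m M hne hbound C hC hy hx' hx
    have : ∑ a, |x' a - x a| = ∑ a, |x a - x' a| := by
      simp [abs_sub_comm]
    linarith [key m M hne hbound C hC hy hx' hx, this ▸ key m M hne hbound C hC hy hx' hx]
end

section
/- Let m̄ be a bounded (by M) set-valued payoff function on finite sets A × B extended linearly to Δ(A × B), C ⊆ ℝ^d a closed convex set, and C̃ = { μ ∈ Δ(A × B) : m̄(μ) ⊆ C }, assumed nonempty. Then for any probability distribution π ∈ Δ(A × B), sup_{d ∈ m̄(π)} inf_{c ∈ C} ‖c − d‖₂ ≤ M √(N_A N_B) · inf_{μ ∈ C̃} ‖π − μ‖₂, where N_A = |A| and N_B = |B|. -/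
open scoped BigOperators

theorem stmt4 {A B : Type*} [Fintype A] [Fintype B] {d : ℕ}
    (m : A × B → Set (EuclideanSpace ℝ (Fin d))) (M : ℝ)
    (hbound : ∀ ab, ∀ v ∈ m ab, ‖v‖ ≤ M)
    (C : Set (EuclideanSpace ℝ (Fin d))) (hCcl : IsClosed C) (hCcv : Convex ℝ C)
    (hCtne : ∃ μ0, μ0 ∈ stdSimplex ℝ (A × B) ∧ mixSet m μ0 ⊆ C)
    (π : A × B → ℝ) (hπ : π ∈ stdSimplex ℝ (A × B)) :
    ∀ x ∈ mixSet m π, ∀ μ, μ ∈ stdSimplex ℝ (A × B) → mixSet m μ ⊆ C →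
      Metric.infDist x C ≤
        M * Real.sqrt ((Fintype.card A : ℝ) * (Fintype.card B : ℝ)) *
          Real.sqrt (∑ ab, (π ab - μ ab) ^ 2) := by
  intro x hx μ hμ hsub
  obtain ⟨θ, hθ, rfl⟩ := hx
  -- A × B is nonempty, since the simplex is nonempty
  have hne : Nonempty (A × B) := by
    by_contra h
    have : (∑ ab, π ab) = 1 := hπ.2
    rw [not_nonempty_iff] at h
    simp [Finset.sum_empty] at this
  have hM : 0 ≤ M := by
    obtain ⟨ab⟩ := hne
    exact le_trans (norm_nonneg (θ ab)) (hbound ab (θ ab) (hθ ab))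
  have hy : (∑ ab, μ ab • θ ab) ∈ C := hsub ⟨θ, hθ, rfl⟩
  have h1 : Metric.infDist (∑ ab, π ab • θ ab) C ≤
      ‖(∑ ab, π ab • θ ab) - ∑ ab, μ ab • θ ab‖ := by
    have := Metric.infDist_le_dist_of_mem hy (x := ∑ ab, π ab • θ ab)
    rwa [dist_eq_norm] at this
  have h2 : (∑ ab, π ab • θ ab) - ∑ ab, μ ab • θ ab = ∑ ab, (π ab - μ ab) • θ ab := by
    rw [← Finset.sum_sub_distrib]
    congr 1; ext ab; rw [sub_smul]
  have h3 : ‖∑ ab, (π ab - μ ab) • θ ab‖ ≤ ∑ ab, |π ab - μ ab| * M := by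
    refine le_trans (norm_sum_le _ _) (Finset.sum_le_sum fun ab _ => ?_)
    rw [norm_smul, Real.norm_eq_abs]
    exact mul_le_mul_of_nonneg_left (hbound ab (θ ab) (hθ ab)) (abs_nonneg _)
  have h4 : (∑ ab, |π ab - μ ab|) ≤
      Real.sqrt ((Fintype.card A : ℝ) * (Fintype.card B : ℝ)) *
        Real.sqrt (∑ ab, (π ab - μ ab) ^ 2) := by
    have hcs := sq_sum_le_card_mul_sum_sq (s := (Finset.univ : Finset (A × B)))
      (f := fun ab => |π ab - μ ab|)
    have hcard : ((Finset.univ : Finset (A × B)).card : ℝ)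
        = (Fintype.card A : ℝ) * (Fintype.card B : ℝ) := by
      simp [Finset.card_univ, Fintype.card_prod]
    have habs : ∀ ab : A × B, |π ab - μ ab| ^ 2 = (π ab - μ ab) ^ 2 := fun ab => sq_abs _
    calc (∑ ab, |π ab - μ ab|)
        = Real.sqrt ((∑ ab, |π ab - μ ab|) ^ 2) := by
          rw [Real.sqrt_sq (Finset.sum_nonneg fun ab _ => abs_nonneg _)]
      _ ≤ Real.sqrt (((Finset.univ : Finset (A × B)).card : ℝ) * ∑ ab, |π ab - μ ab| ^ 2) :=
          Real.sqrt_le_sqrt (by exact_mod_cast hcs)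
      _ = Real.sqrt ((Fintype.card A : ℝ) * (Fintype.card B : ℝ)) *
            Real.sqrt (∑ ab, (π ab - μ ab) ^ 2) := by
          rw [Real.sqrt_mul (by positivity), hcard]
          simp_rw [habs]
  calc Metric.infDist (∑ ab, π ab • θ ab) C
      ≤ ∑ ab, |π ab - μ ab| * M := by rw [h2] at h1; exact h1.trans h3
    _ = M * ∑ ab, |π ab - μ ab| := by rw [Finset.mul_sum]; simp [mul_comm]
    _ ≤ M * (Real.sqrt ((Fintype.card A : ℝ) * (Fintype.card B : ℝ)) *
          Real.sqrt (∑ ab, (π ab - μ ab) ^ 2)) := mul_le_mul_of_nonneg_left h4 hM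
    _ = _ := by ring
end

section
/- Let m : Δ(A) × Δ(B) → ℝ^d be a bounded bilinear payoff function with ‖m(x,y)‖₂ ≤ M for all (x,y), and let C ⊆ ℝ^d be a closed convex set. Fix α ≥ 0 and suppose a strategy ensures Blackwell's condition at each step: at round t+1, the played x_{t+1} satisfies ⟨m̂_t − c_t, m(x_{t+1}, y) − c_t⟩ ≤ 0 for all y ∈ Δ(B), where m̂_t = (1/T_t) Σ_{s=1}^t s^α m(x_s, y_s), T_t = Σ_{s=1}^t s^α, and c_t is the Euclidean projection of m̂_t onto C. Then for all T ≥ 1, inf_{c ∈ C} ‖c − m̂_T‖₂ ≤ 2M √(Σ_{t=1}^T t^{2α}) / Σ_{t=1}^T t^α ≤ 2M K_α / √T, where K_α = ((α+1)/√(2α+1))√(2^{α+1}). -/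
open scoped BigOperators RealInnerProductSpace

lemma aux_bern {α : ℝ} (hα : 0 ≤ α) : 2*α+1 ≤ (2:ℝ)^(α+1) := by
  rcases le_total α 1 with h1 | h1
  · have := one_add_mul_self_le_rpow_one_add (by norm_num : (-1:ℝ) ≤ 1)
      (by linarith : (1:ℝ) ≤ α+1)
    norm_num at this
    linarith
  · have h2 : (1:ℝ) + α * 1 ≤ (1+1)^α := one_add_mul_self_le_rpow_one_add (by norm_num) h1
    have h3 : (2:ℝ)^(α+1) = 2^α * 2 := by
      rw [Real.rpow_add (by norm_num), Real.rpow_one]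
    norm_num at h2
    nlinarith

lemma aux_sum_lower {α : ℝ} (hα : 0 ≤ α) (T : ℕ) :
    (T:ℝ)^(α+1)/(α+1) ≤ ∑ t ∈ Finset.Icc 1 T, (t:ℝ)^α := by
  have hmono : MonotoneOn (fun x : ℝ => x^α) (Set.Icc (0:ℝ) (0 + T)) := by
    intro a ha b hb hab
    exact Real.rpow_le_rpow ha.1 hab hα
  have hint := hmono.integral_le_sum
  rw [integral_rpow (Or.inl (by linarith : (-1:ℝ) < α))] at hint
  simp only [zero_add] at hint
  have hz : (0:ℝ)^(α+1) = 0 := Real.zero_rpow (by linarith)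
  rw [hz, sub_zero] at hint
  refine hint.trans (le_of_eq ?_)
  rw [← Finset.Ico_add_one_right_eq_Icc, Finset.sum_Ico_eq_sum_range]
  simp [add_comm]

set_option maxHeartbeats 1000000 in
theorem stmt10 {A B : Type*} [Fintype A] [Fintype B] [Nonempty A] [Nonempty B] {d : ℕ}
    (m : (A → ℝ) → (B → ℝ) → EuclideanSpace ℝ (Fin d)) (M : ℝ)
    (hbound : ∀ x ∈ stdSimplex ℝ A, ∀ y ∈ stdSimplex ℝ B, ‖m x y‖ ≤ M)
    (C : Set (EuclideanSpace ℝ (Fin d))) (hCne : C.Nonempty) (hCcl : IsClosed C)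
    (hCcv : Convex ℝ C)
    (α : ℝ) (hα : 0 ≤ α)
    (x : ℕ → A → ℝ) (y : ℕ → B → ℝ)
    (hx : ∀ t, x t ∈ stdSimplex ℝ A) (hy : ∀ t, y t ∈ stdSimplex ℝ B)
    (mhat : ℕ → EuclideanSpace ℝ (Fin d))
    (hmhat : ∀ t, mhat t = (∑ s ∈ Finset.Icc 1 t, (s : ℝ) ^ α)⁻¹ •
      ∑ s ∈ Finset.Icc 1 t, (s : ℝ) ^ α • m (x s) (y s))
    (c : ℕ → EuclideanSpace ℝ (Fin d))
    (hcmem : ∀ t, c t ∈ C)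
    (hcproj : ∀ t, ∀ z ∈ C, ‖mhat t - c t‖ ≤ ‖mhat t - z‖)
    (hBlackwell : ∀ t, 1 ≤ t → ∀ q ∈ stdSimplex ℝ B,
      ⟪mhat t - c t, m (x (t + 1)) q - c t⟫ ≤ 0) :
    ∀ T : ℕ, 1 ≤ T →
      Metric.infDist (mhat T) C ≤
          2 * M * Real.sqrt (∑ t ∈ Finset.Icc 1 T, (t : ℝ) ^ (2 * α)) /
            (∑ t ∈ Finset.Icc 1 T, (t : ℝ) ^ α) ∧
        2 * M * Real.sqrt (∑ t ∈ Finset.Icc 1 T, (t : ℝ) ^ (2 * α)) /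
            (∑ t ∈ Finset.Icc 1 T, (t : ℝ) ^ α) ≤
          2 * M * ((α + 1) / Real.sqrt (2 * α + 1) * Real.sqrt ((2 : ℝ) ^ (α + 1))) /
            Real.sqrt T := by
  classical
  -- basic weight facts
  have hwnn : ∀ s : ℕ, (0:ℝ) ≤ (s:ℝ)^α := fun s => Real.rpow_nonneg (Nat.cast_nonneg s) α
  have hT1 : ∀ t : ℕ, 1 ≤ t → (1:ℝ) ≤ ∑ s ∈ Finset.Icc 1 t, (s:ℝ)^α := by
    intro t ht
    have hsub : ({1} : Finset ℕ) ⊆ Finset.Icc 1 t := by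
      simp [Finset.singleton_subset_iff, ht]
    have := Finset.sum_le_sum_of_subset_of_nonneg hsub
      (fun i _ _ => hwnn i)
    simpa using this
  have hTpos : ∀ t : ℕ, 1 ≤ t → (0:ℝ) < ∑ s ∈ Finset.Icc 1 t, (s:ℝ)^α :=
    fun t ht => lt_of_lt_of_le one_pos (hT1 t ht)
  have hmnorm : ∀ s, ‖m (x s) (y s)‖ ≤ M := fun s => hbound _ (hx s) _ (hy s)
  have hM : 0 ≤ M := (norm_nonneg _).trans (hmnorm 0)
  -- average bounded
  have hmhatnorm : ∀ t : ℕ, 1 ≤ t → ‖mhat t‖ ≤ M := by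
    intro t ht
    rw [hmhat t]
    have h1 : ‖∑ s ∈ Finset.Icc 1 t, (s:ℝ)^α • m (x s) (y s)‖ ≤
        (∑ s ∈ Finset.Icc 1 t, (s:ℝ)^α) * M := by
      rw [Finset.sum_mul]
      refine (norm_sum_le _ _).trans (Finset.sum_le_sum ?_)
      intro s _
      rw [norm_smul, Real.norm_eq_abs, abs_of_nonneg (hwnn s)]
      exact mul_le_mul_of_nonneg_left (hmnorm s) (hwnn s)
    rw [norm_smul, Real.norm_eq_abs, abs_of_nonneg (inv_nonneg.mpr (hTpos t ht).le)]
    calc (∑ s ∈ Finset.Icc 1 t, (s:ℝ)^α)⁻¹ * ‖∑ s ∈ Finset.Icc 1 t, (s:ℝ)^α • m (x s) (y s)‖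
        ≤ (∑ s ∈ Finset.Icc 1 t, (s:ℝ)^α)⁻¹ * ((∑ s ∈ Finset.Icc 1 t, (s:ℝ)^α) * M) :=
          mul_le_mul_of_nonneg_left h1 (inv_nonneg.mpr (hTpos t ht).le)
      _ = M := by
          rw [← mul_assoc, inv_mul_cancel₀ (ne_of_gt (hTpos t ht)), one_mul]
  have hBW : ∀ t, 1 ≤ t → ⟪mhat t - c t, m (x (t+1)) (y (t+1)) - c t⟫ ≤ 0 :=
    fun t ht => hBlackwell t ht _ (hy (t+1))
  -- distance to projection bounded by 2M
  have hub : ∀ t, 1 ≤ t → ‖mhat t - c t‖ ≤ 2*M := by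
    intro t ht
    have h1 := hBW t ht
    have h2 : ‖mhat t - c t‖^2 = ⟪mhat t - c t, mhat t - m (x (t+1)) (y (t+1))⟫ +
        ⟪mhat t - c t, m (x (t+1)) (y (t+1)) - c t⟫ := by
      rw [← inner_add_right]
      have he : (mhat t - m (x (t+1)) (y (t+1))) + (m (x (t+1)) (y (t+1)) - c t)
          = mhat t - c t := by abel
      rw [he, real_inner_self_eq_norm_sq]
    have h3 : ⟪mhat t - c t, mhat t - m (x (t+1)) (y (t+1))⟫ ≤
        ‖mhat t - c t‖ * ‖mhat t - m (x (t+1)) (y (t+1))‖ := real_inner_le_norm _ _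
    have h4 : ‖mhat t - m (x (t+1)) (y (t+1))‖ ≤ 2*M := by
      refine (norm_sub_le _ _).trans ?_
      linarith [hmhatnorm t ht, hmnorm (t+1)]
    by_contra hcon
    push_neg at hcon
    have h5 : (0:ℝ) < ‖mhat t - c t‖ := lt_of_le_of_lt (by linarith) hcon
    nlinarith [norm_nonneg (mhat t - m (x (t+1)) (y (t+1)))]
  -- key induction
  have key : ∀ t : ℕ, 1 ≤ t → (∑ s ∈ Finset.Icc 1 t, (s:ℝ)^α)^2 * ‖mhat t - c t‖^2 ≤
      4*M^2 * ∑ s ∈ Finset.Icc 1 t, ((s:ℝ)^α)^2 := by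
    intro t ht
    induction t, ht using Nat.le_induction with
    | base =>
      have hT1e : ∑ s ∈ Finset.Icc (1:ℕ) 1, (s:ℝ)^α = 1 := by simp
      have hS1 : ∑ s ∈ Finset.Icc (1:ℕ) 1, ((s:ℝ)^α)^2 = 1 := by simp
      rw [hT1e, hS1]
      have h := hub 1 le_rfl
      nlinarith [norm_nonneg (mhat 1 - c 1)]
    | succ t ht IH =>
      have hTrec : ∑ s ∈ Finset.Icc 1 (t+1), (s:ℝ)^α =
          (∑ s ∈ Finset.Icc 1 t, (s:ℝ)^α) + ((t+1:ℕ):ℝ)^α :=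
        Finset.sum_Icc_succ_top (by omega) _
      have hSrec : (∑ s ∈ Finset.Icc 1 (t+1), (s:ℝ)^α • m (x s) (y s)) =
          (∑ s ∈ Finset.Icc 1 t, (s:ℝ)^α • m (x s) (y s)) +
          ((t+1:ℕ):ℝ)^α • m (x (t+1)) (y (t+1)) :=
        Finset.sum_Icc_succ_top (by omega) _
      have hTts : (∑ s ∈ Finset.Icc 1 t, (s:ℝ)^α) • mhat t =
          ∑ s ∈ Finset.Icc 1 t, (s:ℝ)^α • m (x s) (y s) := by
        rw [hmhat t]
        exact smul_inv_smul₀ (ne_of_gt (hTpos t ht)) _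
      have hTts1 : (∑ s ∈ Finset.Icc 1 (t+1), (s:ℝ)^α) • mhat (t+1) =
          ∑ s ∈ Finset.Icc 1 (t+1), (s:ℝ)^α • m (x s) (y s) := by
        rw [hmhat (t+1)]
        exact smul_inv_smul₀ (ne_of_gt (hTpos (t+1) (by omega))) _
      set τ : ℝ := ∑ s ∈ Finset.Icc 1 (t+1), (s:ℝ)^α with hτ
      set σ : ℝ := ∑ s ∈ Finset.Icc 1 t, (s:ℝ)^α with hσ
      set wn : ℝ := ((t+1:ℕ):ℝ)^α with hwn
      set u : EuclideanSpace ℝ (Fin d) := mhat t - c t with hu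
      set e : EuclideanSpace ℝ (Fin d) := m (x (t+1)) (y (t+1)) - mhat t with he
      have hid : τ • (mhat (t+1) - c t) = τ • u + wn • e := by
        rw [smul_sub, hTts1, hSrec, ← hTts, hu, he, hTrec]
        module
      have hτpos : (0:ℝ) < τ := hTpos (t+1) (by omega)
      have hwnpos : (0:ℝ) ≤ wn := hwnn (t+1)
      have hnormid : ‖τ • (mhat (t+1) - c t)‖^2 =
          τ^2*‖u‖^2 + 2*τ*wn*⟪u,e⟫ + wn^2*‖e‖^2 := by
        rw [hid, norm_add_sq_real, real_inner_smul_left, real_inner_smul_right,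
          norm_smul, norm_smul, Real.norm_eq_abs, Real.norm_eq_abs,
          abs_of_nonneg hτpos.le, abs_of_nonneg hwnpos]
        ring
      have hue : ⟪u, e⟫ ≤ -‖u‖^2 := by
        have h1 := hBW t ht
        have h2 : ⟪u, e⟫ = ⟪u, m (x (t+1)) (y (t+1)) - c t⟫ - ⟪u, u⟫ := by
          rw [← inner_sub_right]
          congr 1
          rw [he, hu]
          abel
        rw [h2, real_inner_self_eq_norm_sq]
        rw [hu]
        linarith
      have henorm : ‖e‖ ≤ 2*M := by
        rw [he]
        refine (norm_sub_le _ _).trans ?_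
        linarith [hmnorm (t+1), hmhatnorm t ht]
      have hproj : ‖mhat (t+1) - c (t+1)‖ ≤ ‖mhat (t+1) - c t‖ :=
        hcproj (t+1) (c t) (hcmem t)
      have hsum2 : ∑ s ∈ Finset.Icc 1 (t+1), ((s:ℝ)^α)^2 =
          (∑ s ∈ Finset.Icc 1 t, ((s:ℝ)^α)^2) + wn^2 :=
        Finset.sum_Icc_succ_top (by omega) _
      calc τ^2 * ‖mhat (t+1) - c (t+1)‖^2
          ≤ τ^2 * ‖mhat (t+1) - c t‖^2 := by
            apply mul_le_mul_of_nonneg_left _ (sq_nonneg _)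
            exact pow_le_pow_left₀ (norm_nonneg _) hproj 2
        _ = ‖τ • (mhat (t+1) - c t)‖^2 := by
            rw [norm_smul, Real.norm_eq_abs, abs_of_nonneg hτpos.le, mul_pow]
        _ = τ^2*‖u‖^2 + 2*τ*wn*⟪u,e⟫ + wn^2*‖e‖^2 := hnormid
        _ ≤ τ^2*‖u‖^2 + 2*τ*wn*(-‖u‖^2) + wn^2*(2*M)^2 := by
            have ha : 2*τ*wn*⟪u,e⟫ ≤ 2*τ*wn*(-‖u‖^2) :=
              mul_le_mul_of_nonneg_left hue (by positivity)
            have hb : wn^2*‖e‖^2 ≤ wn^2*((2*M)^2) :=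
              mul_le_mul_of_nonneg_left
                (pow_le_pow_left₀ (norm_nonneg _) henorm 2) (sq_nonneg _)
            linarith
        _ ≤ σ^2*‖u‖^2 + 4*M^2*wn^2 := by
            have hc : τ^2 - 2*τ*wn = σ^2 - wn^2 := by
              rw [hTrec]
              ring
            nlinarith [mul_nonneg (sq_nonneg wn) (sq_nonneg ‖u‖)]
        _ ≤ 4*M^2 * (∑ s ∈ Finset.Icc 1 t, ((s:ℝ)^α)^2) + 4*M^2*wn^2 := by
            linarith [IH]
        _ = 4*M^2 * ∑ s ∈ Finset.Icc 1 (t+1), ((s:ℝ)^α)^2 := by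
            rw [hsum2]
            ring
  -- conclude
  intro T hT
  have hkey := key T hT
  have hsq : ∑ t ∈ Finset.Icc 1 T, (t:ℝ)^(2*α) = ∑ s ∈ Finset.Icc 1 T, ((s:ℝ)^α)^2 := by
    refine Finset.sum_congr rfl fun s _ => ?_
    rw [show (2*α) = α*2 by ring, Real.rpow_mul (Nat.cast_nonneg s),
      ← Real.rpow_natCast ((s:ℝ)^α) 2]
    norm_num
  have hS2 : (0:ℝ) ≤ ∑ s ∈ Finset.Icc 1 T, ((s:ℝ)^α)^2 :=
    Finset.sum_nonneg fun i _ => sq_nonneg _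
  have hdist : Metric.infDist (mhat T) C ≤ ‖mhat T - c T‖ := by
    have := Metric.infDist_le_dist_of_mem (x := mhat T) (hcmem T)
    rwa [dist_eq_norm] at this
  have h1 : (∑ s ∈ Finset.Icc 1 T, (s:ℝ)^α) * ‖mhat T - c T‖ ≤
      2*M*Real.sqrt (∑ s ∈ Finset.Icc 1 T, ((s:ℝ)^α)^2) := by
    have hs1 : ((∑ s ∈ Finset.Icc 1 T, (s:ℝ)^α) * ‖mhat T - c T‖)^2 ≤
        (2*M*Real.sqrt (∑ s ∈ Finset.Icc 1 T, ((s:ℝ)^α)^2))^2 := by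
      rw [mul_pow, mul_pow, Real.sq_sqrt hS2, mul_pow]
      nlinarith
    have hL : (0:ℝ) ≤ (∑ s ∈ Finset.Icc 1 T, (s:ℝ)^α) * ‖mhat T - c T‖ :=
      mul_nonneg (hTpos T hT).le (norm_nonneg _)
    have hR : (0:ℝ) ≤ 2*M*Real.sqrt (∑ s ∈ Finset.Icc 1 T, ((s:ℝ)^α)^2) := by
      positivity
    calc (∑ s ∈ Finset.Icc 1 T, (s:ℝ)^α) * ‖mhat T - c T‖
        = Real.sqrt (((∑ s ∈ Finset.Icc 1 T, (s:ℝ)^α) * ‖mhat T - c T‖)^2) :=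
          (Real.sqrt_sq hL).symm
      _ ≤ Real.sqrt ((2*M*Real.sqrt (∑ s ∈ Finset.Icc 1 T, ((s:ℝ)^α)^2))^2) :=
          Real.sqrt_le_sqrt hs1
      _ = _ := Real.sqrt_sq hR
  have hfirst : Metric.infDist (mhat T) C ≤
      2 * M * Real.sqrt (∑ t ∈ Finset.Icc 1 T, (t : ℝ) ^ (2 * α)) /
        (∑ t ∈ Finset.Icc 1 T, (t : ℝ) ^ α) := by
    rw [hsq, le_div_iff₀ (hTpos T hT)]
    calc Metric.infDist (mhat T) C * (∑ t ∈ Finset.Icc 1 T, (t:ℝ)^α)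
        ≤ ‖mhat T - c T‖ * (∑ t ∈ Finset.Icc 1 T, (t:ℝ)^α) :=
          mul_le_mul_of_nonneg_right hdist (hTpos T hT).le
      _ ≤ _ := by rw [mul_comm]; exact h1
  refine ⟨hfirst, ?_⟩
  -- second inequality
  have hTR : (1:ℝ) ≤ (T:ℝ) := by exact_mod_cast hT
  have hTRpos : (0:ℝ) < T := by linarith
  have hsqrtT : (0:ℝ) < Real.sqrt T := Real.sqrt_pos.mpr hTRpos
  have hup : Real.sqrt (∑ t ∈ Finset.Icc 1 T, (t:ℝ)^(2*α)) ≤ (T:ℝ)^α * Real.sqrt T := by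
    have hb : ∑ t ∈ Finset.Icc 1 T, (t:ℝ)^(2*α) ≤ (T:ℝ) * ((T:ℝ)^α)^2 := by
      rw [hsq]
      calc ∑ s ∈ Finset.Icc 1 T, ((s:ℝ)^α)^2
          ≤ ∑ s ∈ Finset.Icc 1 T, ((T:ℝ)^α)^2 := by
            refine Finset.sum_le_sum fun i hi => ?_
            have : (i:ℝ)^α ≤ (T:ℝ)^α :=
              Real.rpow_le_rpow (Nat.cast_nonneg i)
                (by exact_mod_cast (Finset.mem_Icc.mp hi).2) hα
            exact pow_le_pow_left₀ (hwnn i) this 2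
        _ = (T:ℝ) * ((T:ℝ)^α)^2 := by
            rw [Finset.sum_const, Nat.card_Icc]
            simp [nsmul_eq_mul]
    calc Real.sqrt (∑ t ∈ Finset.Icc 1 T, (t:ℝ)^(2*α))
        ≤ Real.sqrt ((T:ℝ) * ((T:ℝ)^α)^2) := Real.sqrt_le_sqrt hb
      _ = (T:ℝ)^α * Real.sqrt T := by
          rw [Real.sqrt_mul hTRpos.le, Real.sqrt_sq (hwnn T)]
          ring
  have hlow := aux_sum_lower hα T
  have hα1 : (0:ℝ) < α + 1 := by linarith
  have hTα1 : (0:ℝ) < (T:ℝ)^(α+1) := Real.rpow_pos_of_pos hTRpos _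
  have hden : (0:ℝ) < (T:ℝ)^(α+1)/(α+1) := div_pos hTα1 hα1
  have hK : α+1 ≤ (α+1)/Real.sqrt (2*α+1)*Real.sqrt ((2:ℝ)^(α+1)) := by
    have h2a : (0:ℝ) < 2*α+1 := by linarith
    have hsp : (0:ℝ) < Real.sqrt (2*α+1) := Real.sqrt_pos.mpr h2a
    have hss : Real.sqrt (2*α+1) ≤ Real.sqrt ((2:ℝ)^(α+1)) :=
      Real.sqrt_le_sqrt (aux_bern hα)
    calc α+1 = (α+1)/Real.sqrt (2*α+1)*Real.sqrt (2*α+1) := by field_simp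
      _ ≤ _ := mul_le_mul_of_nonneg_left hss (by positivity)
  calc 2 * M * Real.sqrt (∑ t ∈ Finset.Icc 1 T, (t : ℝ) ^ (2 * α)) /
        (∑ t ∈ Finset.Icc 1 T, (t : ℝ) ^ α)
      ≤ 2*M*((T:ℝ)^α * Real.sqrt T) / ((T:ℝ)^(α+1)/(α+1)) := by
        refine div_le_div₀
          (mul_nonneg (by linarith : (0:ℝ) ≤ 2*M)
            (mul_nonneg (hwnn T) (Real.sqrt_nonneg _)))
          (mul_le_mul_of_nonneg_left hup (by linarith : (0:ℝ) ≤ 2*M)) hden hlow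
    _ = 2*M*(α+1) / Real.sqrt T := by
        have hTα : (T:ℝ)^(α+1) = (T:ℝ)^α * (T:ℝ) := by
          rw [Real.rpow_add hTRpos, Real.rpow_one]
        have hss : Real.sqrt T * Real.sqrt T = (T:ℝ) := Real.mul_self_sqrt hTRpos.le
        have e1 : 2*M*((T:ℝ)^α*Real.sqrt T)*Real.sqrt T = 2*M*((T:ℝ)^α*(T:ℝ)) := by
          linear_combination (2*M*(T:ℝ)^α) * hss
        have e2 : 2*M*(α+1)*((T:ℝ)^(α+1)/(α+1)) = 2*M*((T:ℝ)^α*(T:ℝ)) := by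
          rw [hTα]
          field_simp
        rw [div_eq_div_iff hden.ne' hsqrtT.ne', e1, e2]
    _ ≤ 2 * M * ((α + 1) / Real.sqrt (2 * α + 1) * Real.sqrt ((2 : ℝ) ^ (α + 1))) /
        Real.sqrt T := by
        rw [div_le_div_iff_of_pos_right hsqrtT]
        exact mul_le_mul_of_nonneg_left hK (by linarith)
end

section
/- In the setting of polynomially weighted Blackwell approachability: let d_t denote the squared Euclidean distance of m̂_t = (1/T_t) Σ_{s=1}^t s^α m(x_s,y_s) to the closed convex set C, with T_t = Σ_{s=1}^t s^α. If ⟨m̂_t − c_t, m(x_{t+1},y_{t+1}) − c_t⟩ ≤ 0 where c_t is the projection of m̂_t onto C, and ‖m(x,y)‖₂ ≤ M for all x,y, then d_{t+1} ≤ d_t (1 − 2(t+1)^α / T_{t+1}) + ((t+1)^α / T_{t+1})² · 4M². -/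
/-!
The running mean moves towards the new payoff: with `η = (t+1)^α / T_{t+1}`,
`m̂_{t+1} = η • m(x_{t+1}, y_{t+1}) + (1 - η) • m̂_t`. Expanding `‖m̂_{t+1} - c_t‖²` around
`m̂_t - c_t`, the Blackwell condition turns the cross term into at most `-2η d_t`, and the
quadratic term is at most `η² ‖m(x_{t+1}, y_{t+1}) - m̂_t‖² ≤ η² (2M)²`, since `m̂_t`, a weighted
mean of payoffs, also lies in the ball of radius `M`. Finally `d_{t+1} ≤ ‖m̂_{t+1} - c_t‖²`
because `c_t ∈ C`.
-/

open scoped RealInnerProductSpace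

section Approachability

variable {E : Type*} [NormedAddCommGroup E] [InnerProductSpace ℝ E]

theorem norm_combo_sub_sq_le_of_inner_nonpos {p v c : E} {a b K : ℝ} (ha : 0 ≤ a)
    (hab : a + b = 1) (hpvc : ⟪p - c, v - c⟫ ≤ 0) (hvp : ‖v - p‖ ≤ K) :
    ‖a • v + b • p - c‖ ^ 2 ≤ ‖p - c‖ ^ 2 * (1 - 2 * a) + a ^ 2 * K ^ 2 := by
  have hsplit : a • v + b • p - c = (p - c) + a • (v - p) := by
    rw [eq_sub_of_add_eq' hab]
    module
  have hcross : ⟪p - c, v - p⟫ = ⟪p - c, v - c⟫ - ‖p - c‖ ^ 2 := by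
    rw [show v - p = (v - c) - (p - c) by abel, inner_sub_right, real_inner_self_eq_norm_sq]
  have hsq : ‖v - p‖ ^ 2 ≤ K ^ 2 := pow_le_pow_left₀ (norm_nonneg _) hvp 2
  rw [hsplit, norm_add_sq_real, real_inner_smul_right, norm_smul, mul_pow,
    Real.norm_eq_abs, sq_abs, hcross]
  nlinarith [mul_le_mul_of_nonneg_left hsq (sq_nonneg a)]

theorem infDist_combo_sq_le_of_inner_nonpos {C : Set E} {p v c : E} {a b K : ℝ} (hc : c ∈ C)
    (hproj : Metric.infDist p C = ‖p - c‖) (ha : 0 ≤ a) (hab : a + b = 1)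
    (hpvc : ⟪p - c, v - c⟫ ≤ 0) (hvp : ‖v - p‖ ≤ K) :
    Metric.infDist (a • v + b • p) C ^ 2 ≤
      Metric.infDist p C ^ 2 * (1 - 2 * a) + a ^ 2 * K ^ 2 := by
  have hle : Metric.infDist (a • v + b • p) C ≤ ‖a • v + b • p - c‖ := by
    simpa only [dist_eq_norm] using Metric.infDist_le_dist_of_mem hc
  rw [hproj]
  exact (pow_le_pow_left₀ Metric.infDist_nonneg hle 2).trans
    (norm_combo_sub_sq_le_of_inner_nonpos ha hab hpvc hvp)

theorem Finset.norm_centerMass_le {ι : Type*} {s : Finset ι} {w : ι → ℝ} {z : ι → E} {M : ℝ}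
    (hw₀ : ∀ i ∈ s, 0 ≤ w i) (hws : 0 < ∑ i ∈ s, w i) (hz : ∀ i ∈ s, ‖z i‖ ≤ M) :
    ‖s.centerMass w z‖ ≤ M := by
  simpa using (convex_closedBall (0 : E) M).centerMass_mem hw₀ hws (by simpa using hz)

theorem Finset.centerMass_Icc_add_one {w : ℕ → ℝ} {z : ℕ → E} {t : ℕ}
    (ht : ∑ u ∈ Icc 1 t, w u ≠ 0) :
    (Icc 1 (t + 1)).centerMass w z =
      (w (t + 1) / ∑ u ∈ Icc 1 (t + 1), w u) • z (t + 1) +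
        ((∑ u ∈ Icc 1 t, w u) / ∑ u ∈ Icc 1 (t + 1), w u) • (Icc 1 t).centerMass w z := by
  rw [← insert_Icc_right_eq_Icc_add_one (by omega), centerMass_insert (ha := by simp) (hw := ht),
    sum_insert (by simp)]

end Approachability

theorem stmt11_general {A B : Type*} [Fintype A] [Fintype B] {d : ℕ}
    (m : (A → ℝ) → (B → ℝ) → EuclideanSpace ℝ (Fin d)) (M : ℝ)
    (hbound : ∀ x ∈ stdSimplex ℝ A, ∀ y ∈ stdSimplex ℝ B, ‖m x y‖ ≤ M)
    (C : Set (EuclideanSpace ℝ (Fin d)))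
    (α : ℝ)
    (x : ℕ → A → ℝ) (y : ℕ → B → ℝ)
    (hx : ∀ s, x s ∈ stdSimplex ℝ A) (hy : ∀ s, y s ∈ stdSimplex ℝ B)
    (mhat : ℕ → EuclideanSpace ℝ (Fin d))
    (hmhat : ∀ s, mhat s = (∑ u ∈ Finset.Icc 1 s, (u : ℝ) ^ α)⁻¹ •
      ∑ u ∈ Finset.Icc 1 s, (u : ℝ) ^ α • m (x u) (y u))
    (t : ℕ) (ht : 1 ≤ t)
    (c : EuclideanSpace ℝ (Fin d)) (hcmem : c ∈ C)
    (hcproj : Metric.infDist (mhat t) C = ‖mhat t - c‖)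
    (hBlackwell : ⟪mhat t - c, m (x (t + 1)) (y (t + 1)) - c⟫ ≤ 0) :
    (Metric.infDist (mhat (t + 1)) C) ^ 2 ≤
      (Metric.infDist (mhat t) C) ^ 2 *
          (1 - 2 * ((t + 1 : ℕ) : ℝ) ^ α / ∑ u ∈ Finset.Icc 1 (t + 1), (u : ℝ) ^ α) +
        (((t + 1 : ℕ) : ℝ) ^ α / ∑ u ∈ Finset.Icc 1 (t + 1), (u : ℝ) ^ α) ^ 2 *
          (4 * M ^ 2) := by
  set w : ℕ → ℝ := fun u => (u : ℝ) ^ α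
  set z : ℕ → EuclideanSpace ℝ (Fin d) := fun u => m (x u) (y u)
  have hmean : ∀ s, mhat s = (Finset.Icc 1 s).centerMass w z := hmhat
  have hw : ∀ u ∈ Finset.Icc 1 t, 0 < w u := fun u hu =>
    Real.rpow_pos_of_pos (by exact_mod_cast (Finset.mem_Icc.mp hu).1) α
  have hT : 0 < ∑ u ∈ Finset.Icc 1 t, w u :=
    Finset.sum_pos hw ⟨1, Finset.mem_Icc.mpr ⟨le_rfl, ht⟩⟩
  have hmt : ‖mhat t‖ ≤ M := by
    rw [hmean]
    exact Finset.norm_centerMass_le (fun u hu => (hw u hu).le) hT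
      fun u _ => hbound _ (hx u) _ (hy u)
  have hsum : ∑ u ∈ Finset.Icc 1 (t + 1), w u = w (t + 1) + ∑ u ∈ Finset.Icc 1 t, w u :=
    Finset.sum_Icc_succ_top (by omega) w |>.trans (add_comm _ _)
  have hwt : 0 < w (t + 1) := Real.rpow_pos_of_pos (by positivity) α
  have hvp : ‖z (t + 1) - mhat t‖ ≤ 2 * M := by
    linarith [norm_sub_le (z (t + 1)) (mhat t), hbound _ (hx (t + 1)) _ (hy (t + 1))]
  have hab : w (t + 1) / ∑ u ∈ Finset.Icc 1 (t + 1), w u +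
      (∑ u ∈ Finset.Icc 1 t, w u) / ∑ u ∈ Finset.Icc 1 (t + 1), w u = 1 := by
    rw [← add_div, hsum, div_self (by positivity)]
  rw [hmean (t + 1), Finset.centerMass_Icc_add_one hT.ne', ← hmean t]
  calc _ ≤ _ := infDist_combo_sq_le_of_inner_nonpos hcmem hcproj (by positivity) hab
        hBlackwell hvp
    _ = _ := by ring

theorem stmt11 {A B : Type*} [Fintype A] [Fintype B] {d : ℕ}
    (m : (A → ℝ) → (B → ℝ) → EuclideanSpace ℝ (Fin d)) (M : ℝ)
    (hbound : ∀ x ∈ stdSimplex ℝ A, ∀ y ∈ stdSimplex ℝ B, ‖m x y‖ ≤ M)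
    (C : Set (EuclideanSpace ℝ (Fin d))) (hCne : C.Nonempty) (hCcl : IsClosed C)
    (hCcv : Convex ℝ C)
    (α : ℝ) (hα : 0 ≤ α)
    (x : ℕ → A → ℝ) (y : ℕ → B → ℝ)
    (hx : ∀ s, x s ∈ stdSimplex ℝ A) (hy : ∀ s, y s ∈ stdSimplex ℝ B)
    (mhat : ℕ → EuclideanSpace ℝ (Fin d))
    (hmhat : ∀ s, mhat s = (∑ u ∈ Finset.Icc 1 s, (u : ℝ) ^ α)⁻¹ •
      ∑ u ∈ Finset.Icc 1 s, (u : ℝ) ^ α • m (x u) (y u))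
    (t : ℕ) (ht : 1 ≤ t)
    (c : EuclideanSpace ℝ (Fin d)) (hcmem : c ∈ C)
    (hcproj : Metric.infDist (mhat t) C = ‖mhat t - c‖)
    (hBlackwell : ⟪mhat t - c, m (x (t + 1)) (y (t + 1)) - c⟫ ≤ 0) :
    (Metric.infDist (mhat (t + 1)) C) ^ 2 ≤
      (Metric.infDist (mhat t) C) ^ 2 *
          (1 - 2 * ((t + 1 : ℕ) : ℝ) ^ α / ∑ u ∈ Finset.Icc 1 (t + 1), (u : ℝ) ^ α) +
        (((t + 1 : ℕ) : ℝ) ^ α / ∑ u ∈ Finset.Icc 1 (t + 1), (u : ℝ) ^ α) ^ 2 *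
          (4 * M ^ 2) :=
  stmt11_general m M hbound C α x y hx hy mhat hmhat t ht c hcmem hcproj hBlackwell
end

section
/- Let F be a subset of (Δ(H))^I ⊆ ℝ^{I×H} (vectors of probability distributions over a finite set H indexed by a finite set I), let ρ : Δ(I') × F → ℝ be bounded by R and such that σ ↦ ρ(p, σ) is L-Lipschitz in ℓ² norm uniformly in p. Extend ρ positively homogeneously to the cone F_cone = { λσ : σ ∈ F, λ ≥ 0 } by ρ(p, λσ) = λρ(p, σ) (with ρ(p, 0) = 0). Then for each fixed p, the extension v ↦ ρ(p, v) is L̄-Lipschitz on F_cone in ℓ² norm with L̄ = L + (R + L·N_I)√(N_H/N_I), where N_I = |I| and N_H = |H|. -/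
/-!
Write `D = λσ - λ'σ'` and split `λρ(σ) - λ'ρ(σ') = λ'(ρ(σ) - ρ(σ')) + (λ - λ')ρ(σ)`.
The first term is controlled by Lipschitz continuity, since `λ'(σ - σ') = D - (λ - λ')σ`
and `‖σ‖ ≤ √N_I`; the second by the bound `R`. Both leave a multiple of `|λ - λ'|`, which is
controlled by `‖D‖`: the entries of `D` sum to `(λ - λ')N_I` because every row of `σ` and
`σ'` is a probability vector, so Cauchy–Schwarz over the `N_I N_H` entries gives
`|λ - λ'| ≤ √(N_H / N_I) ‖D‖`. The constant uses the cruder `√N_I ≤ N_I`.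
-/

open Finset

theorem abs_mul_sub_mul_le_of_abs_sub_le {E : Type*} [SeminormedAddCommGroup E]
    [NormedSpace ℝ E] {x y : E} {r s a b R L B C : ℝ} (hb : 0 ≤ b) (hL : 0 ≤ L)
    (hr : |r| ≤ R) (hrs : |r - s| ≤ L * ‖x - y‖) (hx : ‖x‖ ≤ B)
    (hab : |a - b| ≤ C * ‖a • x - b • y‖) :
    |a * r - b * s| ≤ (L + (R + L * B) * C) * ‖a • x - b • y‖ := by
  set D := ‖a • x - b • y‖
  have hscaled : b * ‖x - y‖ ≤ D + |a - b| * B := by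
    calc b * ‖x - y‖ = ‖b • (x - y)‖ := by rw [norm_smul, Real.norm_of_nonneg hb]
      _ = ‖(a • x - b • y) - (a - b) • x‖ := by congr 1; module
      _ ≤ D + |a - b| * ‖x‖ := by
          rw [← Real.norm_eq_abs, ← norm_smul]
          exact norm_sub_le _ _
      _ ≤ D + |a - b| * B := by gcongr
  have hRLB : 0 ≤ R + L * B :=
    add_nonneg ((abs_nonneg r).trans hr) (mul_nonneg hL ((norm_nonneg x).trans hx))
  calc |a * r - b * s| = |b * (r - s) + (a - b) * r| := by ring_nf
    _ ≤ |b * (r - s)| + |(a - b) * r| := abs_add_le _ _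
    _ = b * |r - s| + |a - b| * |r| := by rw [abs_mul, abs_mul, abs_of_nonneg hb]
    _ ≤ b * (L * ‖x - y‖) + |a - b| * R := by gcongr
    _ = L * (b * ‖x - y‖) + |a - b| * R := by ring
    _ ≤ L * (D + |a - b| * B) + |a - b| * R := by gcongr
    _ = L * D + |a - b| * (R + L * B) := by ring
    _ ≤ L * D + C * D * (R + L * B) := by gcongr
    _ = (L + (R + L * B) * C) * D := by ring

theorem EuclideanSpace.abs_sum_le_sqrt_card_mul_norm {ι : Type*} [Fintype ι]
    (w : EuclideanSpace ℝ ι) : |∑ i, w i| ≤ √(Fintype.card ι) * ‖w‖ := by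
  rw [EuclideanSpace.norm_eq, ← Real.sqrt_mul (Nat.cast_nonneg _)]
  apply Real.abs_le_sqrt
  simpa [sq_abs] using sq_sum_le_card_mul_sum_sq (s := univ) (f := fun i => w i)

theorem sum_sq_le_one_of_mem_stdSimplex {ι : Type*} [Fintype ι] {x : ι → ℝ}
    (hx : x ∈ stdSimplex ℝ ι) : ∑ i, x i ^ 2 ≤ 1 := by
  calc ∑ i, x i ^ 2 ≤ ∑ i, x i := by
        gcongr with i
        obtain ⟨h0, h1⟩ := mem_Icc_of_mem_stdSimplex hx i
        nlinarith
    _ = 1 := hx.2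

section RowStochastic

variable {I H : Type*}

noncomputable def euclideanUncurry : (I → H → ℝ) ≃ₗ[ℝ] EuclideanSpace ℝ (I × H) :=
  (LinearEquiv.curry ℝ ℝ I H).symm.trans (WithLp.linearEquiv 2 ℝ (I × H → ℝ)).symm

theorem euclideanUncurry_apply (σ : I → H → ℝ) (q : I × H) :
    euclideanUncurry σ q = σ q.1 q.2 := rfl

variable [Fintype I] [Fintype H]

theorem norm_euclideanUncurry (σ : I → H → ℝ) :
    ‖euclideanUncurry σ‖ = √(∑ i, ∑ s, σ i s ^ 2) := by
  simp [EuclideanSpace.norm_eq, euclideanUncurry_apply, Fintype.sum_prod_type]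

variable {σ σ' : I → H → ℝ}

theorem norm_euclideanUncurry_le_sqrt_card (hσ : ∀ i, σ i ∈ stdSimplex ℝ H) :
    ‖euclideanUncurry σ‖ ≤ √(Fintype.card I) := by
  rw [norm_euclideanUncurry]
  gcongr
  simpa using sum_le_sum fun i (_ : i ∈ univ) => sum_sq_le_one_of_mem_stdSimplex (hσ i)

theorem abs_sub_le_of_rows_mem_stdSimplex [Nonempty I] (hσ : ∀ i, σ i ∈ stdSimplex ℝ H)
    (hσ' : ∀ i, σ' i ∈ stdSimplex ℝ H) (a b : ℝ) :
    |a - b| ≤ √((Fintype.card H : ℝ) / Fintype.card I) *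
      ‖a • euclideanUncurry σ - b • euclideanUncurry σ'‖ := by
  set N : ℝ := (Fintype.card I : ℝ)
  set D := a • euclideanUncurry σ - b • euclideanUncurry σ'
  have hN : 0 < N := Nat.cast_pos.mpr Fintype.card_pos
  have hsum : ∑ q, D q = (a - b) * N := by
    simp only [D, N, PiLp.sub_apply, PiLp.smul_apply, euclideanUncurry_apply, smul_eq_mul,
      Fintype.sum_prod_type, sum_sub_distrib, ← mul_sum, fun i => (hσ i).2, fun i => (hσ' i).2,
      sum_const, card_univ, nsmul_eq_mul, mul_one]
    ring
  have hcard : √(Fintype.card (I × H) : ℝ) = √((Fintype.card H : ℝ) / N) * N := by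
    have : (Fintype.card (I × H) : ℝ) = Fintype.card H / N * N ^ 2 := by
      rw [Fintype.card_prod, Nat.cast_mul]
      field_simp
      exact mul_comm _ _
    rw [this, Real.sqrt_mul (by positivity), Real.sqrt_sq hN.le]
  refine le_of_mul_le_mul_right ?_ hN
  calc |a - b| * N = |∑ q, D q| := by rw [hsum, abs_mul, abs_of_pos hN]
    _ ≤ √(Fintype.card (I × H) : ℝ) * ‖D‖ := EuclideanSpace.abs_sum_le_sqrt_card_mul_norm D
    _ = _ := by rw [hcard]; ring

end RowStochastic

theorem stmt13_general {I I' H : Type*} [Fintype I] [Fintype I'] [Fintype H] [Nonempty I]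
    (F : Set (I → H → ℝ)) (hF : ∀ σ ∈ F, ∀ i, σ i ∈ stdSimplex ℝ H)
    (ρ : (I' → ℝ) → (I → H → ℝ) → ℝ) (R L : ℝ) (hL : 0 ≤ L)
    (hbound : ∀ p ∈ stdSimplex ℝ I', ∀ σ ∈ F, |ρ p σ| ≤ R)
    (hlip : ∀ p ∈ stdSimplex ℝ I', ∀ σ ∈ F, ∀ σ' ∈ F,
      |ρ p σ - ρ p σ'| ≤ L * Real.sqrt (∑ i, ∑ s, (σ i s - σ' i s) ^ 2)) :
    ∀ p ∈ stdSimplex ℝ I', ∀ σ ∈ F, ∀ σ' ∈ F, ∀ lam lam' : ℝ, 0 ≤ lam → 0 ≤ lam' →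
      |lam * ρ p σ - lam' * ρ p σ'| ≤
        (L + (R + L * (Fintype.card I : ℝ)) *
            Real.sqrt ((Fintype.card H : ℝ) / (Fintype.card I : ℝ))) *
          Real.sqrt (∑ i, ∑ s, (lam * σ i s - lam' * σ' i s) ^ 2) := by
  intro p hp σ hσ σ' hσ' lam lam' _ hlam'
  have hsqrt_card : √(Fintype.card I : ℝ) ≤ Fintype.card I := by
    have : (1 : ℝ) ≤ Fintype.card I := Nat.one_le_cast.mpr Fintype.card_pos
    rw [Real.sqrt_le_left (by positivity)]
    nlinarith
  have hlip' : |ρ p σ - ρ p σ'| ≤ L * ‖euclideanUncurry σ - euclideanUncurry σ'‖ := by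
    rw [← map_sub, norm_euclideanUncurry]
    exact hlip p hp σ hσ σ' hσ'
  have hD : ‖lam • euclideanUncurry σ - lam' • euclideanUncurry σ'‖ =
      √(∑ i, ∑ s, (lam * σ i s - lam' * σ' i s) ^ 2) := by
    rw [← map_smul, ← map_smul, ← map_sub, norm_euclideanUncurry]
    rfl
  rw [← hD]
  exact abs_mul_sub_mul_le_of_abs_sub_le hlam' hL (hbound p hp σ hσ) hlip'
    ((norm_euclideanUncurry_le_sqrt_card (hF σ hσ)).trans hsqrt_card)
    (abs_sub_le_of_rows_mem_stdSimplex (hF σ hσ) (hF σ' hσ') lam lam')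

theorem stmt13 {I I' H : Type*} [Fintype I] [Fintype I'] [Fintype H] [Nonempty I]
    (F : Set (I → H → ℝ)) (hF : ∀ σ ∈ F, ∀ i, σ i ∈ stdSimplex ℝ H)
    (ρ : (I' → ℝ) → (I → H → ℝ) → ℝ) (R L : ℝ) (hR : 0 ≤ R) (hL : 0 ≤ L)
    (hbound : ∀ p ∈ stdSimplex ℝ I', ∀ σ ∈ F, |ρ p σ| ≤ R)
    (hlip : ∀ p ∈ stdSimplex ℝ I', ∀ σ ∈ F, ∀ σ' ∈ F,
      |ρ p σ - ρ p σ'| ≤ L * Real.sqrt (∑ i, ∑ s, (σ i s - σ' i s) ^ 2)) :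
    ∀ p ∈ stdSimplex ℝ I', ∀ σ ∈ F, ∀ σ' ∈ F, ∀ lam lam' : ℝ, 0 ≤ lam → 0 ≤ lam' →
      |lam * ρ p σ - lam' * ρ p σ'| ≤
        (L + (R + L * (Fintype.card I : ℝ)) *
            Real.sqrt ((Fintype.card H : ℝ) / (Fintype.card I : ℝ))) *
          Real.sqrt (∑ i, ∑ s, (lam * σ i s - lam' * σ' i s) ^ 2) :=
  stmt13_general F hF ρ R L hL hbound hlip
end

section
/- Let X₁, …, X_n be a martingale difference sequence of random vectors in ℝ^d (i.e., E[X_t | F_{t−1}] = 0) with ‖X_t‖₂ ≤ 2R almost surely for all t. Then for all δ ∈ (0,1), with probability at least 1 − δ, ‖(1/n) Σ_{t=1}^n X_t‖₂ ≤ 4R √(ln(2/δ)/n). -/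
/-!
Pinelis' argument. If `‖v‖ ≤ c` in a real inner product space, then pointwise
`cosh ‖x + v‖ ≤ cosh ‖x‖ cosh c + ⟪z x, v⟫` for a vector `z x` depending only on `x`; this comes
from the convexity of `u ↦ cosh √u`. Applied to `x = λ Sₖ` and `v = λ Xₖ₊₁`, the linear term
vanishes in expectation because `Xₖ₊₁` is a martingale difference, so
`E cosh (λ ‖Sₙ‖) ≤ cosh (λ c)ⁿ ≤ exp (n λ² c² / 2)`. The exponential Markov inequality together
with `exp ≤ 2 cosh` and the choice `λ = r / (n c²)` gives the Hoeffding–Azuma bound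
`P (‖Sₙ‖ ≥ r) ≤ 2 exp (-r² / (2 n c²))`; with `c = 2R` and `r = 4R √(n log (2/δ))` this is `δ² / 2`.
-/

open MeasureTheory ProbabilityTheory Real Set Finset
open scoped Nat RealInnerProductSpace

namespace Real

lemma cosh_le_cosh_of_le {x y : ℝ} (hx : 0 ≤ x) (hxy : x ≤ y) : cosh x ≤ cosh y :=
  cosh_strictMonoOn.monotoneOn hx (hx.trans hxy) hxy

lemma convexOn_cosh_sqrt : ConvexOn ℝ (Ici 0) fun u => cosh √u := by
  have hasSum_cosh_sqrt {u : ℝ} (hu : 0 ≤ u) : HasSum (fun n => u ^ n / (2 * n)!) (cosh √u) := by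
    simpa [pow_mul, sq_sqrt hu] using hasSum_cosh √u
  refine ⟨convex_Ici 0, fun x hx y hy a b ha hb hab => ?_⟩
  refine hasSum_le (fun n => ?_) (hasSum_cosh_sqrt ((convex_Ici 0) hx hy ha hb hab))
    (((hasSum_cosh_sqrt hx).mul_left a).add ((hasSum_cosh_sqrt hy).mul_left b))
  have := (convexOn_pow n).2 hx hy ha hb hab
  simp only [smul_eq_mul] at this ⊢
  calc (a * x + b * y) ^ n / (2 * n)! ≤ (a * x ^ n + b * y ^ n) / (2 * n)! := by gcongr
    _ = _ := by ring

lemma cosh_le_of_sq_le {a b c s : ℝ} (ha : 0 ≤ a) (hc : 0 ≤ c) (hs : 0 ≤ s) (hb : |b| ≤ a * c)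
    (hsq : s ^ 2 ≤ a ^ 2 + 2 * b + c ^ 2) :
    cosh s ≤ cosh a * cosh c + sinh a * sinh c / (a * c) * b := by
  rcases (mul_nonneg ha hc).eq_or_lt with hac | hac
  · have hb0 : b = 0 := abs_nonpos_iff.1 (hac ▸ hb)
    have hsinh : sinh a * sinh c = 0 := by
      rcases mul_eq_zero.1 hac.symm with rfl | rfl <;> simp
    calc cosh s ≤ cosh (a + c) := cosh_le_cosh_of_le hs (by nlinarith)
      _ = _ := by rw [cosh_add, hsinh, hb0]; ring
  · have ha0 : a ≠ 0 := by rintro rfl; simp at hac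
    have hc0 : c ≠ 0 := by rintro rfl; simp at hac
    obtain ⟨hb₁, hb₂⟩ := abs_le.1 hb
    -- `a² + 2b + c²` is the convex combination `(1 - θ) (a - c)² + θ (a + c)²`
    set θ := (a * c + b) / (2 * (a * c))
    have hθ₀ : 0 ≤ θ := div_nonneg (by linarith) (by positivity)
    have hθ₁ : 0 ≤ 1 - θ := by
      rw [sub_nonneg, div_le_one (by positivity)]; linarith
    have hcomb : (1 - θ) • (a - c) ^ 2 + θ • (a + c) ^ 2 = a ^ 2 + 2 * b + c ^ 2 := by
      simp only [smul_eq_mul, θ]; field_simp; ring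
    have hconv := convexOn_cosh_sqrt.2 (mem_Ici.2 (sq_nonneg (a - c)))
      (mem_Ici.2 (sq_nonneg (a + c))) hθ₁ hθ₀ (by ring)
    dsimp only at hconv
    rw [hcomb] at hconv
    simp only [smul_eq_mul, sqrt_sq_eq_abs, cosh_abs] at hconv
    calc cosh s = cosh √(s ^ 2) := by rw [sqrt_sq hs]
      _ ≤ cosh √(a ^ 2 + 2 * b + c ^ 2) := cosh_le_cosh_of_le (sqrt_nonneg _) (sqrt_le_sqrt hsq)
      _ ≤ (1 - θ) * cosh (a - c) + θ * cosh (a + c) := hconv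
      _ = _ := by rw [cosh_sub, cosh_add]; simp only [θ]; field_simp; ring

end Real

section InnerProductSpace

variable {E : Type*} [NormedAddCommGroup E] [InnerProductSpace ℝ E]

lemma norm_sinh_norm_div_norm_smul (x : E) : ‖(sinh ‖x‖ / ‖x‖) • x‖ = sinh ‖x‖ := by
  rcases eq_or_ne x 0 with rfl | hx
  · simp
  · rw [norm_smul, norm_div, norm_norm, norm_of_nonneg (sinh_nonneg_iff.2 (norm_nonneg x)),
      div_mul_cancel₀ _ (norm_ne_zero_iff.2 hx)]

lemma cosh_norm_add_le (x : E) {v : E} {c : ℝ} (hv : ‖v‖ ≤ c) :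
    cosh ‖x + v‖ ≤ cosh ‖x‖ * cosh c + sinh c / c * ⟪(sinh ‖x‖ / ‖x‖) • x, v⟫ := by
  have hb : |⟪x, v⟫| ≤ ‖x‖ * c :=
    (abs_real_inner_le_norm x v).trans (mul_le_mul_of_nonneg_left hv (norm_nonneg x))
  have hsq : ‖x + v‖ ^ 2 ≤ ‖x‖ ^ 2 + 2 * ⟪x, v⟫ + c ^ 2 := by
    rw [norm_add_sq_real]; gcongr
  have := cosh_le_of_sq_le (norm_nonneg x) ((norm_nonneg v).trans hv) (norm_nonneg _) hb hsq
  rw [real_inner_smul_left]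
  convert this using 2
  ring

end InnerProductSpace

namespace MeasureTheory

variable {Ω E : Type*} {m m0 : MeasurableSpace Ω} {μ : Measure Ω}

lemma ae_norm_sum_Icc_le [NormedAddCommGroup E] {X : ℕ → Ω → E} {c : ℝ}
    (hXc : ∀ t, ∀ᵐ ω ∂μ, ‖X t ω‖ ≤ c) (n : ℕ) :
    ∀ᵐ ω ∂μ, ‖∑ t ∈ Icc 1 n, X t ω‖ ≤ n * c := by
  filter_upwards [ae_all_iff.2 hXc] with ω hω
  calc ‖∑ t ∈ Icc 1 n, X t ω‖ ≤ ∑ t ∈ Icc 1 n, ‖X t ω‖ := norm_sum_le _ _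
    _ ≤ ∑ t ∈ Icc 1 n, c := sum_le_sum fun t _ => hω t
    _ = n * c := by simp

lemma StronglyAdapted.stronglyMeasurable_sum_Icc [NormedAddCommGroup E] {ℱ : Filtration ℕ m0}
    {X : ℕ → Ω → E} (hX : StronglyAdapted ℱ X) (n : ℕ) :
    StronglyMeasurable[ℱ n] fun ω => ∑ t ∈ Icc 1 n, X t ω :=
  Finset.stronglyMeasurable_fun_sum _ fun t ht => (hX t).mono (ℱ.mono (mem_Icc.1 ht).2)

variable [NormedAddCommGroup E] [InnerProductSpace ℝ E] [CompleteSpace E]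

lemma integral_inner_eq_zero_of_condExp_eq_zero (hm : m ≤ m0) [SigmaFinite (μ.trim hm)]
    {Z V : Ω → E} (hZ : StronglyMeasurable[m] Z) (hZV : Integrable (fun ω => ⟪Z ω, V ω⟫) μ)
    (hV : Integrable V μ) (hV0 : μ[V | m] =ᵐ[μ] 0) : ∫ ω, ⟪Z ω, V ω⟫ ∂μ = 0 := by
  calc ∫ ω, ⟪Z ω, V ω⟫ ∂μ = ∫ ω, (μ[fun ω => ⟪Z ω, V ω⟫ | m]) ω ∂μ := (integral_condExp hm).symm
    _ = ∫ ω, ⟪Z ω, (μ[V | m]) ω⟫ ∂μ :=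
      integral_congr_ae (condExp_bilin_of_stronglyMeasurable_left (innerSL ℝ) hZ hZV hV)
    _ = ∫ ω, ⟪Z ω, (0 : E)⟫ ∂μ :=
      integral_congr_ae (hV0.mono fun ω h => by simp only [h, Pi.zero_apply])
    _ = 0 := by simp

lemma integral_cosh_norm_add_le [IsFiniteMeasure μ] (hm : m ≤ m0) {Y V : Ω → E}
    (hY : StronglyMeasurable[m] Y) {A : ℝ} (hYA : ∀ᵐ ω ∂μ, ‖Y ω‖ ≤ A)
    (hV : AEStronglyMeasurable V μ) {c : ℝ} (hVc : ∀ᵐ ω ∂μ, ‖V ω‖ ≤ c)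
    (hV0 : μ[V | m] =ᵐ[μ] 0) :
    ∫ ω, cosh ‖Y ω + V ω‖ ∂μ ≤ cosh c * ∫ ω, cosh ‖Y ω‖ ∂μ := by
  set Z : Ω → E := fun ω => (sinh ‖Y ω‖ / ‖Y ω‖) • Y ω
  have hYn := hY.norm.measurable
  have hZ : StronglyMeasurable[m] Z :=
    ((continuous_sinh.measurable.comp hYn).div hYn).stronglyMeasurable.smul hY
  have hZA : ∀ᵐ ω ∂μ, ‖Z ω‖ ≤ sinh A := hYA.mono fun ω h => by
    rw [norm_sinh_norm_div_norm_smul]; exact sinh_le_sinh.2 h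
  have hY' : AEStronglyMeasurable Y μ := (hY.mono hm).aestronglyMeasurable
  have hVint : Integrable V μ := .of_bound hV c hVc
  have hcoshY : Integrable (fun ω => cosh ‖Y ω‖) μ := .of_bound (by fun_prop) (cosh A) <|
    hYA.mono fun ω h => by
      rw [norm_of_nonneg (cosh_pos _).le]; exact cosh_le_cosh_of_le (norm_nonneg _) h
  have hcoshYV : Integrable (fun ω => cosh ‖Y ω + V ω‖) μ :=
    .of_bound (by fun_prop) (cosh (A + c)) <| (hYA.and hVc).mono fun ω h => by
      rw [norm_of_nonneg (cosh_pos _).le]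
      exact cosh_le_cosh_of_le (norm_nonneg _) ((norm_add_le _ _).trans (add_le_add h.1 h.2))
  have hZV : Integrable (fun ω => ⟪Z ω, V ω⟫) μ :=
    (innerSL ℝ).integrable_of_bilin_of_bdd_left (sinh A) (hZ.mono hm).aestronglyMeasurable hZA hVint
  calc ∫ ω, cosh ‖Y ω + V ω‖ ∂μ
      ≤ ∫ ω, (cosh ‖Y ω‖ * cosh c + sinh c / c * ⟪Z ω, V ω⟫) ∂μ :=
        integral_mono_ae hcoshYV ((hcoshY.mul_const _).add (hZV.const_mul _))
          (hVc.mono fun ω h => cosh_norm_add_le (Y ω) h)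
    _ = cosh c * ∫ ω, cosh ‖Y ω‖ ∂μ := by
        rw [integral_add (hcoshY.mul_const _) (hZV.const_mul _), integral_const_mul,
          integral_inner_eq_zero_of_condExp_eq_zero hm hZ hZV hVint hV0, integral_mul_const]
        ring

lemma integral_cosh_norm_sum_Icc_le [IsProbabilityMeasure μ] {ℱ : Filtration ℕ m0}
    {X : ℕ → Ω → E} (hX : StronglyAdapted ℱ X) {c : ℝ} (hXc : ∀ t, ∀ᵐ ω ∂μ, ‖X t ω‖ ≤ c)
    (hX0 : ∀ t, 1 ≤ t → μ[X t | ℱ (t - 1)] =ᵐ[μ] 0) (n : ℕ) :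
    ∫ ω, cosh ‖∑ t ∈ Icc 1 n, X t ω‖ ∂μ ≤ cosh c ^ n := by
  induction n with
  | zero => simp
  | succ k ih =>
    calc ∫ ω, cosh ‖∑ t ∈ Icc 1 (k + 1), X t ω‖ ∂μ
        = ∫ ω, cosh ‖∑ t ∈ Icc 1 k, X t ω + X (k + 1) ω‖ ∂μ := by
          simp_rw [sum_Icc_succ_top (by omega : 1 ≤ k + 1)]
      _ ≤ cosh c * ∫ ω, cosh ‖∑ t ∈ Icc 1 k, X t ω‖ ∂μ :=
          integral_cosh_norm_add_le (ℱ.le k) (hX.stronglyMeasurable_sum_Icc k)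
            (ae_norm_sum_Icc_le hXc k) ((hX (k + 1)).mono (ℱ.le _)).aestronglyMeasurable
            (hXc (k + 1)) (by simpa using hX0 (k + 1) (by omega))
      _ ≤ cosh c * cosh c ^ k := by gcongr
      _ = cosh c ^ (k + 1) := (pow_succ' _ _).symm

lemma measureReal_le_norm_sum_Icc_le [IsProbabilityMeasure μ] {ℱ : Filtration ℕ m0}
    {X : ℕ → Ω → E} (hX : StronglyAdapted ℱ X) {c : ℝ} (hXc : ∀ t, ∀ᵐ ω ∂μ, ‖X t ω‖ ≤ c)
    (hX0 : ∀ t, 1 ≤ t → μ[X t | ℱ (t - 1)] =ᵐ[μ] 0) (n : ℕ) {r : ℝ} (hr : 0 ≤ r) :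
    μ.real {ω | r ≤ ‖∑ t ∈ Icc 1 n, X t ω‖} ≤ 2 * exp (-r ^ 2 / (2 * n * c ^ 2)) := by
  set S : Ω → ℝ := fun ω => ‖∑ t ∈ Icc 1 n, X t ω‖
  -- the minimiser of `n l² c² / 2 - l r`
  set l := r / (n * c ^ 2)
  have hl : 0 ≤ l := by positivity
  have hS : AEStronglyMeasurable S μ :=
    ((hX.stronglyMeasurable_sum_Icc n).mono (ℱ.le n)).norm.aestronglyMeasurable
  have hSb := ae_norm_sum_Icc_le hXc n
  have hexp : Integrable (fun ω => exp (l * S ω)) μ :=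
    .of_bound (by fun_prop) (exp (l * (n * c))) <| hSb.mono fun ω h => by
      rw [norm_of_nonneg (exp_pos _).le]; gcongr
  have hcosh : Integrable (fun ω => cosh (l * S ω)) μ :=
    .of_bound (by fun_prop) (cosh (l * (n * c))) <| hSb.mono fun ω h => by
      rw [norm_of_nonneg (cosh_pos _).le]; exact cosh_le_cosh_of_le (by positivity) (by gcongr)
  have hmgf : mgf S μ l ≤ 2 * cosh (l * c) ^ n := by
    have := integral_cosh_norm_sum_Icc_le (hX.smul l) (c := l * c)
      (fun t => (hXc t).mono fun ω h => by
        simp only [Pi.smul_apply, norm_smul, norm_of_nonneg hl]; gcongr)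
      (fun t ht => (condExp_smul l (X t) _).trans ((hX0 t ht).mono fun ω h => by simp [h])) n
    simp only [Pi.smul_apply, ← smul_sum, norm_smul, norm_of_nonneg hl] at this
    calc mgf S μ l = ∫ ω, exp (l * S ω) ∂μ := rfl
      _ ≤ ∫ ω, 2 * cosh (l * S ω) ∂μ :=
        integral_mono hexp (hcosh.const_mul 2) fun ω => by
          rw [cosh_eq]; linarith [exp_pos (-(l * S ω))]
      _ ≤ 2 * cosh (l * c) ^ n := by rw [integral_const_mul]; gcongr
  calc μ.real {ω | r ≤ S ω} ≤ exp (-l * r) * mgf S μ l := measure_ge_le_exp_mul_mgf r hl hexp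
    _ ≤ exp (-l * r) * (2 * exp ((l * c) ^ 2 / 2) ^ n) := by
        gcongr
        exact hmgf.trans (by gcongr; exact cosh_le_exp_half_sq _)
    _ = 2 * exp (-r ^ 2 / (2 * n * c ^ 2)) := by
        rw [← exp_nat_mul, mul_left_comm, ← exp_add]
        congr 2
        rcases eq_or_ne ((n : ℝ) * c ^ 2) 0 with h | h
        · simp [l, h, mul_assoc]
        · simp only [l]; field_simp; ring

end MeasureTheory

theorem stmt17 {Ω : Type*} {m0 : MeasurableSpace Ω} {d : ℕ}
    (μ : Measure Ω) [IsProbabilityMeasure μ]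
    (ℱ : Filtration ℕ m0)
    (X : ℕ → Ω → EuclideanSpace ℝ (Fin d))
    (hadapted : Adapted ℱ X)
    (n : ℕ) (hn : 1 ≤ n) (R : ℝ)
    (hbound : ∀ t, ∀ᵐ ω ∂μ, ‖X t ω‖ ≤ 2 * R)
    (hmart : ∀ t, 1 ≤ t → μ[X t | ℱ (t - 1)] =ᵐ[μ] 0)
    (δ : ℝ) (hδ0 : 0 < δ) (hδ1 : δ < 1) :
    ENNReal.ofReal (1 - δ) ≤
      μ {ω | ‖(n : ℝ)⁻¹ • ∑ t ∈ Finset.Icc 1 n, X t ω‖ ≤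
        4 * R * Real.sqrt (Real.log (2 / δ) / n)} := by
  set ε := 4 * R * √(log (2 / δ) / n)
  set G := {ω | ‖(n : ℝ)⁻¹ • ∑ t ∈ Icc 1 n, X t ω‖ ≤ ε}
  suffices hbad : μ.real Gᶜ ≤ δ by
    have h := measureReal_union_le (μ := μ) G Gᶜ
    rw [union_compl_self, probReal_univ] at h
    rw [← ofReal_measureReal]
    exact ENNReal.ofReal_le_ofReal (by linarith)
  have hn0 : (0 : ℝ) < n := by exact_mod_cast hn
  have hL : 0 < log (2 / δ) := log_pos (by rw [lt_div_iff₀ hδ0]; linarith)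
  have hR0 : 0 ≤ R := by
    obtain ⟨ω, hω⟩ := (hbound 0).exists
    linarith [norm_nonneg (X 0 ω)]
  rcases hR0.eq_or_lt with rfl | hR
  · have hG0 : μ Gᶜ = 0 := mem_ae_iff.1 <| by
      filter_upwards [ae_norm_sum_Icc_le hbound n] with ω hω
      simp_all [G, ε, norm_smul]
    simp [measureReal_def, hG0, hδ0.le]
  have hG : Gᶜ ⊆ {ω | n * ε ≤ ‖∑ t ∈ Icc 1 n, X t ω‖} := fun ω hω => by
    simp only [G, mem_compl_iff, mem_ofPred_eq, not_le, norm_smul, norm_inv, norm_natCast] at hω ⊢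
    rw [← div_eq_inv_mul, lt_div_iff₀ hn0] at hω
    linarith
  calc μ.real Gᶜ ≤ μ.real {ω | n * ε ≤ ‖∑ t ∈ Icc 1 n, X t ω‖} := measureReal_mono hG
    _ ≤ 2 * exp (-(n * ε) ^ 2 / (2 * n * (2 * R) ^ 2)) :=
        measureReal_le_norm_sum_Icc_le hadapted.stronglyAdapted hbound hmart n (by positivity)
    _ = 2 * exp (-(log (2 / δ) + log (2 / δ))) := by
        have hsq : √(log (2 / δ) / n) ^ 2 = log (2 / δ) / n := sq_sqrt (by positivity)
        congr 2
        simp only [ε, mul_pow, hsq]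
        field_simp
        ring
    _ = 2 * (δ / 2) ^ 2 := by
        rw [exp_neg, exp_add, exp_log (by positivity)]
        field_simp
    _ ≤ δ := by nlinarith
end
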